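/- Let F be a finite field with |F| = q elements and char(F) = p ≠ 2. Then C(UT_2(F), ⋆) = W + ⟨z_1z_2⟩^{TS(*)} + Id(UT_2(F), ⋆), where W is the F-linear span of all polynomials l·g_1(g_2^{q+l−1} − g_2^l) + g_1^q g_2^l with 1 ≤ l ≤ p (l acting via the natural map ℕ → F) and g_1, g_2 symmetric polynomials; that is, a polynomial is *-central for (UT_2(F), ⋆) if and only if it is a sum of an element of W, an F-linear combination of products uv with u, v skew polynomials, and a *-polynomial identity for (UT_2(F), ⋆). -/

import Mathlib

open scoped BigOperators

set_option maxHeartbeats 1000000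
set_option synthInstance.maxHeartbeats 400000

/-- The algebra of 2×2 upper triangular matrices over `F`. -/
def UT2 (F : Type*) [Field F] : Subalgebra F (Matrix (Fin 2) (Fin 2) F) where
  carrier := {M | M 1 0 = 0}
  mul_mem' := by
    intro a b ha hb
    simp only [Set.mem_setOf_eq] at *
    rw [Matrix.mul_apply, Fin.sum_univ_two, ha, hb]
    ring
  one_mem' := by simp [Matrix.one_apply]
  add_mem' := by
    intro a b ha hb
    simp only [Set.mem_setOf_eq] at *
    simp [Matrix.add_apply, ha, hb]
  zero_mem' := by simp
  algebraMap_mem' := by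
    intro r
    simp [Matrix.algebraMap_matrix_apply]

theorem mem_UT2 (F : Type*) [Field F] {M : Matrix (Fin 2) (Fin 2) F} :
    M ∈ UT2 F ↔ M 1 0 = 0 := Iff.rfl

/-- The involution `⋆` on `UT2 F`: `(a c; 0 b) ↦ (b c; 0 a)`. -/
def starUT (F : Type*) [Field F] (M : ↥(UT2 F)) : ↥(UT2 F) :=
  ⟨!![M.1 1 1, M.1 0 1; 0, M.1 0 0], by rw [mem_UT2]; simp⟩

/-- The involution `s` on `UT2 F`: `(a c; 0 b) ↦ (b -c; 0 a)`. -/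
def starS (F : Type*) [Field F] (M : ↥(UT2 F)) : ↥(UT2 F) :=
  ⟨!![M.1 1 1, -(M.1 0 1); 0, M.1 0 0], by rw [mem_UT2]; simp⟩

/-- The free unital associative `F`-algebra `F⟨Y ∪ Z⟩` on the variables
`y_0, y_1, …` (indexed by `Sum.inl`) and `z_0, z_1, …` (indexed by `Sum.inr`). -/
abbrev FA (F : Type*) [Field F] := FreeAlgebra F (ℕ ⊕ ℕ)

noncomputable def yv (F : Type*) [Field F] (i : ℕ) : FA F := FreeAlgebra.ι F (Sum.inl i)
noncomputable def zv (F : Type*) [Field F] (i : ℕ) : FA F := FreeAlgebra.ι F (Sum.inr i)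

noncomputable def fStarAux (F : Type*) [Field F] : FA F →ₐ[F] (FA F)ᵐᵒᵖ :=
  FreeAlgebra.lift F fun v =>
    MulOpposite.op (Sum.elim (fun i => FreeAlgebra.ι F (Sum.inl i))
      (fun i => -FreeAlgebra.ι F (Sum.inr i)) v)

/-- The involution `*` on `F⟨Y ∪ Z⟩`: the unique `F`-linear anti-automorphism
with `y_i* = y_i` and `z_i* = -z_i`. -/
noncomputable def fStar (F : Type*) [Field F] (f : FA F) : FA F := (fStarAux F f).unop

/-- A symmetric polynomial of `F⟨Y ∪ Z⟩`. -/
def IsSym (F : Type*) [Field F] (f : FA F) : Prop := fStar F f = f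
/-- A skew polynomial of `F⟨Y ∪ Z⟩`. -/
def IsSkew (F : Type*) [Field F] (f : FA F) : Prop := fStar F f = -f

/-- A substitution relative to an involution `σ` on `UT2 F`: an algebra homomorphism
sending each `y_i` to a symmetric element and each `z_i` to a skew-symmetric element. -/
def IsSubstWith (F : Type*) [Field F] (σ : ↥(UT2 F) → ↥(UT2 F))
    (φ : FA F →ₐ[F] ↥(UT2 F)) : Prop :=
  (∀ i, σ (φ (yv F i)) = φ (yv F i)) ∧ (∀ i, σ (φ (zv F i)) = -(φ (zv F i)))

/-- The `*`-polynomial identities of `(UT2 F, σ)`. -/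
def IdWith (F : Type*) [Field F] (σ : ↥(UT2 F) → ↥(UT2 F)) : Submodule F (FA F) where
  carrier := {f | ∀ φ : FA F →ₐ[F] ↥(UT2 F), IsSubstWith F σ φ → φ f = 0}
  add_mem' := by
    intro a b ha hb φ hφ
    rw [map_add, ha φ hφ, hb φ hφ, add_zero]
  zero_mem' := by intro φ _; exact map_zero φ
  smul_mem' := by
    intro c x hx φ hφ
    rw [map_smul, hx φ hφ, smul_zero]

/-- The `*`-central polynomials of `(UT2 F, σ)`. -/
def CWith (F : Type*) [Field F] (σ : ↥(UT2 F) → ↥(UT2 F)) : Submodule F (FA F) where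
  carrier := {f | ∀ φ : FA F →ₐ[F] ↥(UT2 F), IsSubstWith F σ φ →
    φ f ∈ Subalgebra.center F ↥(UT2 F)}
  add_mem' := by
    intro a b ha hb φ hφ
    rw [map_add]; exact add_mem (ha φ hφ) (hb φ hφ)
  zero_mem' := by intro φ _; rw [map_zero]; exact zero_mem _
  smul_mem' := by
    intro c x hx φ hφ
    rw [map_smul]; exact Subalgebra.smul_mem _ (hx φ hφ) c

/-- `⟨z₁z₂⟩^{TS(*)}`: the `F`-linear span of all products of two skew polynomials. -/
def TSz (F : Type*) [Field F] : Submodule F (FA F) :=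
  Submodule.span F {f : FA F | ∃ u v, IsSkew F u ∧ IsSkew F v ∧ f = u * v}


/-!
The symmetric elements of `(UT₂(F), ⋆)` are the matrices `(s t; 0 s)`, a copy of the dual
numbers `F[ε]`, in which `x ^ q = s` because `q = |F|` is `0` in `F` and `s ^ q = s`; a computation
then shows that every generator of `W` evaluates to the scalar `s₁ s₂ ^ l`. Since `2 ≠ 0`, the
skew elements are the matrices `diag(a, -a)`, so a product of two of them is scalar.

Conversely, a `*`-central `f` evaluates under every substitution to a scalar `c`, which `⋆` fixes.
Hence the symmetric polynomial `g = (f + f*) / 2` also evaluates to `c`, and `g ^ q` to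
`c ^ q = c`; so `f - g ^ q` is an identity, while `g ^ q` is the generator of `W` with `l = p`,
`g₁ = g`, `g₂ = 1`.
-/

section UpperTriangular

variable {F : Type*} [Field F]

@[simp]
lemma UT2_apply_one_zero (M : ↥(UT2 F)) : M.1 1 0 = 0 := M.2

lemma UT2_ext {M N : ↥(UT2 F)} (h₀₀ : M.1 0 0 = N.1 0 0) (h₀₁ : M.1 0 1 = N.1 0 1)
    (h₁₁ : M.1 1 1 = N.1 1 1) : M = N := by
  apply Subtype.ext
  ext i j
  fin_cases i <;> fin_cases j <;> simp [h₀₀, h₀₁, h₁₁]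

@[simp]
lemma UT2_mul_apply_zero_zero (M N : ↥(UT2 F)) : (M * N).1 0 0 = M.1 0 0 * N.1 0 0 := by
  simp [Matrix.mul_apply, Fin.sum_univ_two]

@[simp]
lemma UT2_mul_apply_zero_one (M N : ↥(UT2 F)) :
    (M * N).1 0 1 = M.1 0 0 * N.1 0 1 + M.1 0 1 * N.1 1 1 := by
  simp [Matrix.mul_apply, Fin.sum_univ_two]

@[simp]
lemma UT2_mul_apply_one_one (M N : ↥(UT2 F)) : (M * N).1 1 1 = M.1 1 1 * N.1 1 1 := by
  simp [Matrix.mul_apply, Fin.sum_univ_two]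

lemma UT2_algebraMap_apply (c : F) (i j : Fin 2) :
    (algebraMap F ↥(UT2 F) c).1 i j = if i = j then c else 0 := by
  simp [Matrix.algebraMap_matrix_apply]

lemma eq_algebraMap_of_mem_center {M : ↥(UT2 F)} (hM : M ∈ Subalgebra.center F ↥(UT2 F)) :
    M = algebraMap F _ (M.1 0 0) := by
  have hc := Subalgebra.mem_center_iff.mp hM
  have h₁ := congrArg (fun X : ↥(UT2 F) => X.1 0 1) (hc ⟨!![1, 0; 0, 0], by simp [mem_UT2]⟩)
  have h₂ := congrArg (fun X : ↥(UT2 F) => X.1 0 1) (hc ⟨!![0, 1; 0, 0], by simp [mem_UT2]⟩)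
  simp only [UT2_mul_apply_zero_one, Matrix.of_apply, Matrix.cons_val', Matrix.cons_val_zero,
    Matrix.cons_val_fin_one, Matrix.cons_val_one, one_mul, zero_mul, mul_zero, mul_one, add_zero,
    zero_add] at h₁ h₂
  exact UT2_ext (by simp [UT2_algebraMap_apply]) (by simp [UT2_algebraMap_apply, h₁])
    (by simp [UT2_algebraMap_apply, h₂])

end UpperTriangular

section Involution

variable {F : Type*} [Field F]

@[simp] lemma starUT_apply_zero_zero (M : ↥(UT2 F)) : (starUT F M).1 0 0 = M.1 1 1 := rfl
@[simp] lemma starUT_apply_zero_one (M : ↥(UT2 F)) : (starUT F M).1 0 1 = M.1 0 1 := rfl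
@[simp] lemma starUT_apply_one_one (M : ↥(UT2 F)) : (starUT F M).1 1 1 = M.1 0 0 := rfl

def starUTOpHom : ↥(UT2 F) →ₐ[F] (↥(UT2 F))ᵐᵒᵖ where
  toFun M := MulOpposite.op (starUT F M)
  map_one' := congrArg MulOpposite.op <| UT2_ext (by simp) (by simp) (by simp)
  map_mul' M N := congrArg MulOpposite.op <| UT2_ext (by simp [mul_comm]) (by simp; ring)
    (by simp [mul_comm])
  map_zero' := congrArg MulOpposite.op <| UT2_ext (by simp) (by simp) (by simp)
  map_add' M N := congrArg MulOpposite.op <| UT2_ext (by simp) (by simp) (by simp)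
  commutes' c := congrArg MulOpposite.op <|
    UT2_ext (by simp [UT2_algebraMap_apply]) (by simp [UT2_algebraMap_apply])
      (by simp [UT2_algebraMap_apply])

@[simp]
lemma starUTOpHom_apply (M : ↥(UT2 F)) : starUTOpHom M = MulOpposite.op (starUT F M) := rfl

def symUT (s t : F) : ↥(UT2 F) := ⟨!![s, t; 0, s], by simp [mem_UT2]⟩

@[simp] lemma symUT_apply_zero_zero (s t : F) : (symUT s t).1 0 0 = s := rfl
@[simp] lemma symUT_apply_zero_one (s t : F) : (symUT s t).1 0 1 = t := rfl
@[simp] lemma symUT_apply_one_one (s t : F) : (symUT s t).1 1 1 = s := rfl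

lemma eq_symUT_of_starUT_eq {M : ↥(UT2 F)} (hM : starUT F M = M) :
    M = symUT (M.1 0 0) (M.1 0 1) := by
  have h₁₁ := congrArg (fun X : ↥(UT2 F) => X.1 0 0) hM
  exact UT2_ext rfl rfl (by simpa using h₁₁)

lemma entries_of_starUT_eq_neg (h2 : (2 : F) ≠ 0) {M : ↥(UT2 F)} (hM : starUT F M = -M) :
    M.1 0 1 = 0 ∧ M.1 1 1 = -M.1 0 0 := by
  have h₀₁ := congrArg (fun X : ↥(UT2 F) => X.1 0 1) hM
  have h₀₀ := congrArg (fun X : ↥(UT2 F) => X.1 0 0) hM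
  simp only [starUT_apply_zero_one, starUT_apply_zero_zero, NegMemClass.coe_neg,
    Matrix.neg_apply] at h₀₁ h₀₀
  exact ⟨by simpa [h2] using (by linear_combination h₀₁ : (2 : F) * M.1 0 1 = 0), h₀₀⟩

lemma mul_mem_center_of_starUT_eq_neg (h2 : (2 : F) ≠ 0) {M N : ↥(UT2 F)}
    (hM : starUT F M = -M) (hN : starUT F N = -N) :
    M * N ∈ Subalgebra.center F ↥(UT2 F) := by
  obtain ⟨hM₀₁, hM₁₁⟩ := entries_of_starUT_eq_neg h2 hM
  obtain ⟨hN₀₁, hN₁₁⟩ := entries_of_starUT_eq_neg h2 hN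
  convert (Subalgebra.center F ↥(UT2 F)).algebraMap_mem (M.1 0 0 * N.1 0 0)
  exact UT2_ext (by simp [UT2_algebraMap_apply])
    (by simp [UT2_algebraMap_apply, hM₀₁, hN₀₁])
    (by simp [UT2_algebraMap_apply, hM₁₁, hN₁₁])

end Involution

-- The polynomials spanning `W`, with `g₁ = x` and `g₂ = y`.
def wGen (F : Type*) [CommSemiring F] {A : Type*} [Ring A] [Algebra F A] (q l : ℕ) (x y : A) :
    A :=
  (l : F) • (x * (y ^ (q + l - 1) - y ^ l)) + x ^ q * y ^ l

lemma AlgHom.map_wGen {F A B : Type*} [CommSemiring F] [Ring A] [Algebra F A] [Ring B]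
    [Algebra F B] (φ : A →ₐ[F] B) (q l : ℕ) (x y : A) :
    φ (wGen F q l x y) = wGen F q l (φ x) (φ y) := by
  simp [wGen]

lemma wGen_eq_of_cast_eq_zero {F A : Type*} [CommSemiring F] [Ring A] [Algebra F A] {l : ℕ}
    (hl : (l : F) = 0) (q : ℕ) (x y : A) : wGen F q l x y = x ^ q * y ^ l := by
  rw [wGen, hl, zero_smul, zero_add]

section SymmetricPowers

variable {F : Type*} [Field F]

lemma symUT_mul (s t s' t' : F) : symUT s t * symUT s' t' = symUT (s * s') (s * t' + t * s') :=
  UT2_ext (by simp) (by simp) (by simp)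

lemma symUT_pow (s t : F) (m : ℕ) : symUT s t ^ m = symUT (s ^ m) (m * s ^ (m - 1) * t) := by
  induction m with
  | zero => exact UT2_ext (by simp) (by simp) (by simp)
  | succ m ih =>
    rw [pow_succ, ih, symUT_mul]
    rcases m with _ | m
    · simp
    · congr 1 <;> push_cast <;> ring

lemma symUT_add (s t s' t' : F) : symUT s t + symUT s' t' = symUT (s + s') (t + t') :=
  UT2_ext (by simp) (by simp) (by simp)

lemma symUT_sub (s t s' t' : F) : symUT s t - symUT s' t' = symUT (s - s') (t - t') :=
  UT2_ext (by simp) (by simp) (by simp)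

lemma smul_symUT (c s t : F) : c • symUT s t = symUT (c * s) (c * t) :=
  UT2_ext (by simp) (by simp) (by simp)

lemma symUT_zero_right (s : F) : symUT s 0 = algebraMap F _ s :=
  UT2_ext (by simp [UT2_algebraMap_apply]) (by simp [UT2_algebraMap_apply])
    (by simp [UT2_algebraMap_apply])

lemma symUT_pow_card [Fintype F] (s t : F) : symUT s t ^ Fintype.card F = symUT s 0 := by
  rw [symUT_pow, FiniteField.cast_card_eq_zero, FiniteField.pow_card, zero_mul, zero_mul]

lemma wGen_symUT [Fintype F] {l : ℕ} (hl : 1 ≤ l) (s₁ t₁ s₂ t₂ : F) :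
    wGen F (Fintype.card F) l (symUT s₁ t₁) (symUT s₂ t₂) = symUT (s₁ * s₂ ^ l) 0 := by
  obtain ⟨k, rfl⟩ : ∃ k, l = k + 1 := ⟨l - 1, by omega⟩
  rw [wGen, ← add_assoc, Nat.add_sub_cancel, pow_add _ (Fintype.card F) k, symUT_pow_card,
    symUT_pow_card, symUT_pow, symUT_pow, symUT_mul, symUT_sub, symUT_mul, smul_symUT,
    symUT_mul, symUT_add]
  rcases k with _ | k
  · congr 1 <;> simp
  · congr 1 <;> push_cast <;> ring

end SymmetricPowers

section FreeInvolution

variable {F : Type*} [Field F]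

lemma fStar_add (a b : FA F) : fStar F (a + b) = fStar F a + fStar F b := by
  simp [fStar]

lemma fStar_smul (c : F) (a : FA F) : fStar F (c • a) = c • fStar F a := by
  simp [fStar]

lemma fStar_mul (a b : FA F) : fStar F (a * b) = fStar F b * fStar F a := by
  simp [fStar]

lemma fStar_one : fStar F (1 : FA F) = 1 := by
  simp [fStar]

lemma fStar_fStar (a : FA F) : fStar F (fStar F a) = a := by
  have h : (AlgHom.opComm (fStarAux F)).comp (fStarAux F) = AlgHom.id F (FA F) := by
    ext (i | i) <;> simp [fStarAux]
  exact AlgHom.congr_fun h a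

lemma isSym_half_add_fStar (a : FA F) : IsSym F ((2 : F)⁻¹ • (a + fStar F a)) := by
  rw [IsSym, fStar_smul, fStar_add, fStar_fStar, add_comm]

lemma isSym_one : IsSym F (1 : FA F) := fStar_one

lemma IsSubstWith.map_fStar {φ : FA F →ₐ[F] ↥(UT2 F)} (hφ : IsSubstWith F (starUT F) φ)
    (a : FA F) : φ (fStar F a) = starUT F (φ a) := by
  have h : (AlgHom.op φ).comp (fStarAux F) = starUTOpHom.comp φ := by
    ext (i | i)
    · simpa [fStarAux, yv] using (hφ.1 i).symm
    · simpa [fStarAux, zv, ← MulOpposite.op_neg] using (hφ.2 i).symm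
  exact congrArg MulOpposite.unop (AlgHom.congr_fun h a)

end FreeInvolution

section CentralPolynomials

variable {F : Type*} [Field F]

lemma IdWith_le_CWith (σ : ↥(UT2 F) → ↥(UT2 F)) : IdWith F σ ≤ CWith F σ := by
  intro f hf φ hφ
  rw [hf φ hφ]
  exact zero_mem _

lemma TSz_le_CWith (h2 : (2 : F) ≠ 0) : TSz F ≤ CWith F (starUT F) := by
  rw [TSz, Submodule.span_le]
  rintro _ ⟨u, v, hu, hv, rfl⟩ φ hφ
  rw [map_mul]
  apply mul_mem_center_of_starUT_eq_neg h2
  · rw [← hφ.map_fStar, hu, map_neg]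
  · rw [← hφ.map_fStar, hv, map_neg]

lemma wGen_mem_CWith [Fintype F] {l : ℕ} (hl : 1 ≤ l) {g₁ g₂ : FA F} (hg₁ : IsSym F g₁)
    (hg₂ : IsSym F g₂) : wGen F (Fintype.card F) l g₁ g₂ ∈ CWith F (starUT F) := by
  intro φ hφ
  have hsym : ∀ {g}, IsSym F g → φ g = symUT ((φ g).1 0 0) ((φ g).1 0 1) := fun hg =>
    eq_symUT_of_starUT_eq (by rw [← hφ.map_fStar, hg])
  rw [φ.map_wGen, hsym hg₁, hsym hg₂, wGen_symUT hl, symUT_zero_right]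
  exact Subalgebra.algebraMap_mem _ _

lemma sub_pow_card_mem_IdWith [Fintype F] (h2 : (2 : F) ≠ 0) {f : FA F}
    (hf : f ∈ CWith F (starUT F)) :
    f - ((2 : F)⁻¹ • (f + fStar F f)) ^ Fintype.card F ∈ IdWith F (starUT F) := by
  intro φ hφ
  obtain ⟨c, hc⟩ : ∃ c, φ f = algebraMap F _ c :=
    ⟨_, eq_algebraMap_of_mem_center (hf φ hφ)⟩
  have hstar : φ (fStar F f) = φ f := by
    rw [hφ.map_fStar, hc]
    exact congrArg MulOpposite.unop (starUTOpHom.commutes c)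
  rw [map_sub, map_pow, map_smul, map_add, hstar, ← two_smul F (φ f), smul_smul,
    inv_mul_cancel₀ h2, one_smul, hc, ← map_pow, FiniteField.pow_card, sub_self]

end CentralPolynomials

theorem stmt_18 (F : Type*) [Field F] [Fintype F] (q : ℕ) (hq : Fintype.card F = q)
    (p : ℕ) [CharP F p] (hp : p ≠ 2) :
    CWith F (starUT F) =
      Submodule.span F {f : FA F | ∃ l : ℕ, 1 ≤ l ∧ l ≤ p ∧ ∃ g₁ g₂,
          IsSym F g₁ ∧ IsSym F g₂ ∧
          f = (l : F) • (g₁ * (g₂ ^ (q + l - 1) - g₂ ^ l)) + g₁ ^ q * g₂ ^ l} ⊔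
        TSz F ⊔ IdWith F (starUT F) := by
  subst hq
  have h2 : (2 : F) ≠ 0 := Ring.two_ne_zero (by rwa [ringChar.eq F p])
  refine le_antisymm (fun f hf => ?_) (sup_le (sup_le ?_ (TSz_le_CWith h2)) (IdWith_le_CWith _))
  · set g := (2 : F)⁻¹ • (f + fStar F f)
    have hg : g ^ Fintype.card F = wGen F (Fintype.card F) p g 1 := by
      rw [wGen_eq_of_cast_eq_zero (CharP.cast_eq_zero F p), one_pow, mul_one]
    refine Submodule.mem_sup.mpr ⟨g ^ Fintype.card F, Submodule.mem_sup_left ?_,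
      _, sub_pow_card_mem_IdWith h2 hf, add_sub_cancel _ f⟩
    exact Submodule.subset_span ⟨p, (CharP.char_is_prime F p).one_le, le_rfl, g, 1,
      isSym_half_add_fStar f, isSym_one, hg⟩
  · rw [Submodule.span_le]
    rintro _ ⟨l, hl, -, g₁, g₂, hg₁, hg₂, rfl⟩
    exact wGen_mem_CWith hl hg₁ hg₂
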